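/- For every cluster s ∈ Σ, the cluster s is coloured purple if and only if |s ∩ R₁| and |s ∩ R₂| are both odd; in particular every purple cluster has even cardinality. -/

import Mathlib

/-- Colours of roots and clusters. -/
inductive Colour : Type
  | red | blue | purple | black
deriving DecidableEq

/-- A cluster picture on a finite set `R`: a collection of nonempty subsets of `R`
containing `R` and all singletons, any two of which are nested or disjoint. -/
def IsClusterPicture {α : Type*} [DecidableEq α] (R : Finset α) (CP : Set (Finset α)) : Prop :=
  (∀ s ∈ CP, s.Nonempty ∧ s ⊆ R) ∧ R ∈ CP ∧ (∀ r ∈ R, ({r} : Finset α) ∈ CP) ∧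
    ∀ s ∈ CP, ∀ t ∈ CP, s ⊆ t ∨ t ⊆ s ∨ s ∩ t = ∅

/-- `t` is a child of `s`: a maximal cluster properly contained in `s`. -/
def IsChildOf {α : Type*} [DecidableEq α] (CP : Set (Finset α)) (t s : Finset α) : Prop :=
  t ∈ CP ∧ t ⊂ s ∧ ∀ u ∈ CP, u ⊂ s → t ⊆ u → u = t

/-- The number of children of `s` coloured red or purple. -/
noncomputable def aCount {α : Type*} [DecidableEq α] (CP : Set (Finset α)) (col : Finset α → Colour)
    (s : Finset α) : ℕ :=
  Set.ncard {t : Finset α | IsChildOf CP t s ∧ (col t = Colour.red ∨ col t = Colour.purple)}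

/-- The number of children of `s` coloured blue or purple. -/
noncomputable def bCount {α : Type*} [DecidableEq α] (CP : Set (Finset α)) (col : Finset α → Colour)
    (s : Finset α) : ℕ :=
  Set.ncard {t : Finset α | IsChildOf CP t s ∧ (col t = Colour.blue ∨ col t = Colour.purple)}

/-- `col` is the recursive colouring of the clusters of the cluster picture `CP`
induced by the colouring `c` of the roots. -/
def IsColouring {α : Type*} [DecidableEq α] (R : Finset α) (CP : Set (Finset α))
    (c : α → Colour) (col : Finset α → Colour) : Prop :=
  (∀ r ∈ R, col {r} = c r) ∧
    ∀ s ∈ CP, 2 ≤ s.card →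
      ((Odd (aCount CP col s) ∧ Even (bCount CP col s)) → col s = Colour.red) ∧
      ((Odd (bCount CP col s) ∧ Even (aCount CP col s)) → col s = Colour.blue) ∧
      ((Odd (aCount CP col s) ∧ Odd (bCount CP col s)) → col s = Colour.purple) ∧
      ((Even (aCount CP col s) ∧ Even (bCount CP col s)) → col s = Colour.black)

/-- A cluster is chromatic if it is red, blue or purple. -/
def Chromatic {β : Type*} (col : β → Colour) (t : β) : Prop :=
  col t = Colour.red ∨ col t = Colour.blue ∨ col t = Colour.purple

lemma exists_child {α : Type*} [DecidableEq α] {R : Finset α} {CP : Set (Finset α)}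
    (hCP : IsClusterPicture R CP) {s : Finset α} (hs : s ∈ CP) (h2 : 2 ≤ s.card)
    {x : α} (hx : x ∈ s) : ∃ t, IsChildOf CP t s ∧ x ∈ t := by
  obtain ⟨hNE, _hR, hsingle, _hnest⟩ := hCP
  have hxR : x ∈ R := (hNE s hs).2 hx
  set S : Set (Finset α) := {u | u ∈ CP ∧ x ∈ u ∧ u ⊂ s} with hS
  have hSfin : S.Finite := Set.Finite.subset (R.powerset : Finset (Finset α)).finite_toSet
    (fun u hu => Finset.mem_coe.mpr (Finset.mem_powerset.mpr ((hNE u hu.1).2)))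
  have hxs : ({x} : Finset α) ⊂ s := by
    refine (Finset.singleton_subset_iff.mpr hx).ssubset_of_ne ?_
    intro h
    rw [← h] at h2
    simp at h2
  have hSne : S.Nonempty := ⟨{x}, hsingle x hxR, Finset.mem_singleton_self x, hxs⟩
  obtain ⟨t, htS, htmax⟩ := Set.Finite.exists_maximalFor Finset.card S hSfin hSne
  refine ⟨t, ⟨htS.1, htS.2.2, ?_⟩, htS.2.1⟩
  intro u hu hus htu
  have huS : u ∈ S := ⟨hu, htu htS.2.1, hus⟩
  have hcard := le_antisymm (Finset.card_le_card htu) (htmax huS (Finset.card_le_card htu))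
  exact (Finset.eq_of_subset_of_card_le htu (le_of_eq hcard.symm)).symm

-- uniqueness

lemma child_eq_of_mem {α : Type*} [DecidableEq α] {R : Finset α} {CP : Set (Finset α)}
    (hCP : IsClusterPicture R CP) {s t₁ t₂ : Finset α}
    (h1 : IsChildOf CP t₁ s) (h2 : IsChildOf CP t₂ s)
    {x : α} (hx1 : x ∈ t₁) (hx2 : x ∈ t₂) : t₁ = t₂ := by
  rcases hCP.2.2.2 t₁ h1.1 t₂ h2.1 with h | h | h
  · exact (h1.2.2 t₂ h2.1 h2.2.1 h).symm
  · exact h2.2.2 t₁ h1.1 h1.2.1 h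
  · exact absurd (Finset.mem_inter.mpr ⟨hx1, hx2⟩) (by simp [h])


lemma colour_iffs (cs : Colour) (a b : ℕ)
    (k1 : Odd a ∧ Even b → cs = Colour.red) (k2 : Odd b ∧ Even a → cs = Colour.blue)
    (k3 : Odd a ∧ Odd b → cs = Colour.purple) (k4 : Even a ∧ Even b → cs = Colour.black) :
    (cs = Colour.red ↔ Odd a ∧ Even b) ∧ (cs = Colour.blue ↔ Even a ∧ Odd b) ∧
      (cs = Colour.purple ↔ Odd a ∧ Odd b) := by
  rcases Nat.even_or_odd a with ha | ha <;> rcases Nat.even_or_odd b with hb | hb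
  · simp [k4 ⟨ha, hb⟩, Nat.not_odd_iff_even.mpr ha, Nat.not_odd_iff_even.mpr hb, ha, hb]
  · simp [k2 ⟨hb, ha⟩, Nat.not_odd_iff_even.mpr ha, ha, hb, Nat.not_even_iff_odd.mpr hb]
  · simp [k1 ⟨ha, hb⟩, Nat.not_odd_iff_even.mpr hb, ha, hb, Nat.not_even_iff_odd.mpr ha]
  · simp [k3 ⟨ha, hb⟩, ha, hb, Nat.not_even_iff_odd.mpr ha, Nat.not_even_iff_odd.mpr hb]


theorem cluster_colour_main {α : Type*} [DecidableEq α] (R : Finset α)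
    (c : α → Colour) (hc : ∀ r ∈ R, c r = Colour.red ∨ c r = Colour.blue)
    (CP : Set (Finset α)) (hCP : IsClusterPicture R CP)
    (col : Finset α → Colour) (hcol : IsColouring R CP c col) :
    ∀ n : ℕ, ∀ s ∈ CP, s.card ≤ n →
      (col s = Colour.red ↔ Odd (s ∩ R.filter (fun r => c r = Colour.red)).card ∧
          Even (s ∩ R.filter (fun r => c r = Colour.blue)).card) ∧
      (col s = Colour.blue ↔ Even (s ∩ R.filter (fun r => c r = Colour.red)).card ∧
          Odd (s ∩ R.filter (fun r => c r = Colour.blue)).card) ∧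
      (col s = Colour.purple ↔ Odd (s ∩ R.filter (fun r => c r = Colour.red)).card ∧
          Odd (s ∩ R.filter (fun r => c r = Colour.blue)).card) := by
  intro n
  induction n with
  | zero =>
    intro s hs hle
    have := (hCP.1 s hs).1
    rw [Nat.le_zero, Finset.card_eq_zero] at hle
    simp [hle] at this
  | succ n IH =>
    intro s hs hle
    rcases eq_or_lt_of_le (Finset.one_le_card.mpr (hCP.1 s hs).1) with h1 | h2
    · -- base case: singleton
      obtain ⟨r, rfl⟩ := Finset.card_eq_one.mp h1.symm
      have hrR : r ∈ R := (hCP.1 _ hs).2 (Finset.mem_singleton_self r)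
      have hcolr : col {r} = c r := hcol.1 r hrR
      rcases hc r hrR with h | h
      · have hred : ({r} : Finset α) ∩ R.filter (fun x => c x = Colour.red) = {r} :=
          Finset.singleton_inter_of_mem (Finset.mem_filter.mpr ⟨hrR, h⟩)
        have hblue : ({r} : Finset α) ∩ R.filter (fun x => c x = Colour.blue) = ∅ :=
          Finset.singleton_inter_of_notMem (by simp [h])
        simp [hred, hblue, hcolr, h, Nat.odd_iff, Nat.even_iff]
      · have hred : ({r} : Finset α) ∩ R.filter (fun x => c x = Colour.red) = ∅ :=
          Finset.singleton_inter_of_notMem (by simp [h])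
        have hblue : ({r} : Finset α) ∩ R.filter (fun x => c x = Colour.blue) = {r} :=
          Finset.singleton_inter_of_mem (Finset.mem_filter.mpr ⟨hrR, h⟩)
        simp [hred, hblue, hcolr, h, Nat.odd_iff, Nat.even_iff]
    · -- inductive step
      have h2' : 2 ≤ s.card := h2
      have hfin : {t : Finset α | IsChildOf CP t s}.Finite :=
        Set.Finite.subset (R.powerset : Finset (Finset α)).finite_toSet
          (fun t ht => Finset.mem_coe.mpr (Finset.mem_powerset.mpr ((hCP.1 t ht.1).2)))
      set C : Finset (Finset α) := hfin.toFinset with hC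
      have hmemC : ∀ t, t ∈ C ↔ IsChildOf CP t s := fun t => Set.Finite.mem_toFinset hfin
      -- s decomposes as union of children
      have hcover : ∀ X : Finset α, s ∩ X = C.biUnion (fun t => t ∩ X) := by
        intro X
        ext x
        simp only [Finset.mem_inter, Finset.mem_biUnion]
        constructor
        · rintro ⟨hxs, hxX⟩
          obtain ⟨t, ht, hxt⟩ := exists_child hCP hs h2' hxs
          exact ⟨t, (hmemC t).mpr ht, hxt, hxX⟩
        · rintro ⟨t, htC, hxt, hxX⟩
          exact ⟨((hmemC t).mp htC).2.1.1 hxt, hxX⟩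
      have hdisj : ∀ X : Finset α, ∀ t₁ ∈ C, ∀ t₂ ∈ C, t₁ ≠ t₂ →
          Disjoint (t₁ ∩ X) (t₂ ∩ X) := by
        intro X t₁ h₁ t₂ h₂ hne
        rw [Finset.disjoint_left]
        intro x hx1 hx2
        exact hne (child_eq_of_mem hCP ((hmemC t₁).mp h₁) ((hmemC t₂).mp h₂)
          (Finset.mem_inter.mp hx1).1 (Finset.mem_inter.mp hx2).1)
      have hcard : ∀ X : Finset α, (s ∩ X).card = ∑ t ∈ C, (t ∩ X).card := by
        intro X
        rw [hcover X, Finset.card_biUnion (hdisj X)]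
      -- apply IH to children
      have hIH : ∀ t ∈ C,
          (col t = Colour.red ↔ Odd (t ∩ R.filter (fun r => c r = Colour.red)).card ∧
              Even (t ∩ R.filter (fun r => c r = Colour.blue)).card) ∧
          (col t = Colour.blue ↔ Even (t ∩ R.filter (fun r => c r = Colour.red)).card ∧
              Odd (t ∩ R.filter (fun r => c r = Colour.blue)).card) ∧
          (col t = Colour.purple ↔ Odd (t ∩ R.filter (fun r => c r = Colour.red)).card ∧
              Odd (t ∩ R.filter (fun r => c r = Colour.blue)).card) := by
        intro t htC
        have ht := (hmemC t).mp htC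
        have : t.card < s.card := Finset.card_lt_card ht.2.1
        exact IH t ht.1 (by omega)
      have hmarkA : ∀ t ∈ C, (Odd (t ∩ R.filter (fun r => c r = Colour.red)).card ↔
          (col t = Colour.red ∨ col t = Colour.purple)) := by
        intro t htC
        obtain ⟨i1, i2, i3⟩ := hIH t htC
        constructor
        · intro h
          rcases Nat.even_or_odd (t ∩ R.filter (fun r => c r = Colour.blue)).card with hb | hb
          · exact Or.inl (i1.mpr ⟨h, hb⟩)
          · exact Or.inr (i3.mpr ⟨h, hb⟩)
        · rintro (h | h)
          · exact (i1.mp h).1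
          · exact (i3.mp h).1
      have hmarkB : ∀ t ∈ C, (Odd (t ∩ R.filter (fun r => c r = Colour.blue)).card ↔
          (col t = Colour.blue ∨ col t = Colour.purple)) := by
        intro t htC
        obtain ⟨i1, i2, i3⟩ := hIH t htC
        constructor
        · intro h
          rcases Nat.even_or_odd (t ∩ R.filter (fun r => c r = Colour.red)).card with hb | hb
          · exact Or.inl (i2.mpr ⟨hb, h⟩)
          · exact Or.inr (i3.mpr ⟨hb, h⟩)
        · rintro (h | h)
          · exact (i2.mp h).2
          · exact (i3.mp h).2
      -- aCount as a filter card
      have haC : aCount CP col s =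
          (C.filter (fun t => col t = Colour.red ∨ col t = Colour.purple)).card := by
        rw [aCount, ← Set.ncard_coe_finset]
        congr 1
        ext t
        simp [hmemC t, Finset.mem_filter, and_comm]
      have hbC : bCount CP col s =
          (C.filter (fun t => col t = Colour.blue ∨ col t = Colour.purple)).card := by
        rw [bCount, ← Set.ncard_coe_finset]
        congr 1
        ext t
        simp [hmemC t, Finset.mem_filter, and_comm]
      have hA : Odd (s ∩ R.filter (fun r => c r = Colour.red)).card ↔
          Odd (aCount CP col s) := by
        rw [hcard, Finset.odd_sum_iff_odd_card_odd, haC,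
          Finset.filter_congr (fun t ht => hmarkA t ht)]
      have hB : Odd (s ∩ R.filter (fun r => c r = Colour.blue)).card ↔
          Odd (bCount CP col s) := by
        rw [hcard, Finset.odd_sum_iff_odd_card_odd, hbC,
          Finset.filter_congr (fun t ht => hmarkB t ht)]
      have hA' : Even (s ∩ R.filter (fun r => c r = Colour.red)).card ↔
          Even (aCount CP col s) := by
        rw [← Nat.not_odd_iff_even, ← Nat.not_odd_iff_even, hA]
      have hB' : Even (s ∩ R.filter (fun r => c r = Colour.blue)).card ↔
          Even (bCount CP col s) := by
        rw [← Nat.not_odd_iff_even, ← Nat.not_odd_iff_even, hB]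
      obtain ⟨k1, k2, k3, k4⟩ := hcol.2 s hs h2'
      exact colour_iffs (col s) _ _
        (fun ⟨x, y⟩ => k1 ⟨hA.mp x, hB'.mp y⟩)
        (fun ⟨x, y⟩ => k2 ⟨hB.mp x, hA'.mp y⟩)
        (fun ⟨x, y⟩ => k3 ⟨hA.mp x, hB.mp y⟩)
        (fun ⟨x, y⟩ => k4 ⟨hA'.mp x, hB'.mp y⟩)


/-- A cluster is purple iff it contains an odd number of red roots and an odd
number of blue roots; in particular every purple cluster is even. -/

theorem cluster_purple_iff {α : Type*} [DecidableEq α] (R : Finset α) (hR : R.Nonempty)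
    (c : α → Colour) (hc : ∀ r ∈ R, c r = Colour.red ∨ c r = Colour.blue)
    (CP : Set (Finset α)) (hCP : IsClusterPicture R CP)
    (col : Finset α → Colour) (hcol : IsColouring R CP c col)
    (s : Finset α) (hs : s ∈ CP) :
    (col s = Colour.purple ↔
      Odd (s ∩ R.filter (fun r => c r = Colour.red)).card ∧
        Odd (s ∩ R.filter (fun r => c r = Colour.blue)).card) ∧
    (col s = Colour.purple → Even s.card) := by
  have main := cluster_colour_main R c hc CP hCP col hcol s.card s hs le_rfl
  refine ⟨main.2.2, ?_⟩
  intro hp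
  obtain ⟨hA, hB⟩ := main.2.2.mp hp
  have hsub := (hCP.1 s hs).2
  have hun : s = (s ∩ R.filter (fun r => c r = Colour.red)) ∪
      (s ∩ R.filter (fun r => c r = Colour.blue)) := by
    ext x
    simp only [Finset.mem_union, Finset.mem_inter, Finset.mem_filter]
    constructor
    · intro hx
      rcases hc x (hsub hx) with h | h
      · exact Or.inl ⟨hx, hsub hx, h⟩
      · exact Or.inr ⟨hx, hsub hx, h⟩
    · rintro (⟨h, -⟩ | ⟨h, -⟩) <;> exact h
  have hdis : Disjoint (s ∩ R.filter (fun r => c r = Colour.red))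
      (s ∩ R.filter (fun r => c r = Colour.blue)) := by
    rw [Finset.disjoint_left]
    intro x hx1 hx2
    simp only [Finset.mem_inter, Finset.mem_filter] at hx1 hx2
    rw [hx1.2.2] at hx2
    exact absurd hx2.2.2 (by simp)
  have hcardeq : s.card = (s ∩ R.filter (fun r => c r = Colour.red)).card +
      (s ∩ R.filter (fun r => c r = Colour.blue)).card := by
    conv_lhs => rw [hun]
    exact Finset.card_union_of_disjoint hdis
  rw [hcardeq]
  exact hA.add_odd hB
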